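/- Let M be an almost paracontact metric manifold whose characteristic form τ is a contact form and whose characteristic vector field ζ is autoparallel (equals the Reeb field of τ), and assume M is τ-normal. Then the tensor field χ(X,Y) = dτ(hX, ψY) satisfies: χ(X,Y) = χ(Y,X) for all X, Y; χ(X,Y) = −dτ(ψhX, Y) = dτ(hψX, Y); χ(X⁺, Y⁻) = 0 for X⁺ a section of V⁺ and Y⁻ a section of V⁻ (V⁺ and V⁻ are χ-orthogonal); and χ|_{V⁺} = (1/2)Π₊, χ|_{V⁻} = (1/2)Π₋. -/
import Mathlib


noncomputable section

/-!
An abstract model of smooth geometry: `F` plays the role of the algebra of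
smooth real-valued functions on a manifold `M`, `V` plays the role of the
`C^∞(M)`-module of smooth vector fields on `M` (with its Lie bracket), and
`D X f` represents the directional derivative of the function `f` along the
vector field `X`.
-/
structure SmoothSetting (F V : Type*) [CommRing F] [Algebra ℝ F]
    [LieRing V] [Module F V] [Module ℝ V] [IsScalarTower ℝ F V] where
  D : V → F → F
  D_add : ∀ (X : V) (f g : F), D X (f + g) = D X f + D X g
  D_mul : ∀ (X : V) (f g : F), D X (f * g) = f * D X g + g * D X f
  D_addX : ∀ (X Y : V) (f : F), D (X + Y) f = D X f + D Y f
  D_smulX : ∀ (f : F) (X : V) (k : F), D (f • X) k = f * D X k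
  D_bracket : ∀ (X Y : V) (f : F), D ⁅X, Y⁆ f = D X (D Y f) - D Y (D X f)
  bracket_smul : ∀ (f : F) (X Y : V), ⁅X, f • Y⁆ = f • ⁅X, Y⁆ + D X f • Y

/-- An almost paracontact metric manifold, modelled abstractly: a quadruple
`(ψ, ζ, τ, g)` where `ψ` is a `(1,1)`-tensor field, `ζ` a vector field, `τ` a
one-form and `g` a pseudo-Riemannian metric, satisfying `ψ² = Id - τ ⊗ ζ`,
`τ(ζ) = 1` and `g(ψX, ψY) = -g(X,Y) + τ(X)τ(Y)` (together with the standard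
consequent identities `ψζ = 0`, `τ ∘ ψ = 0`), and the Levi-Civita connection
`nabla` of `g` (characterised by metricity and torsion-freeness). -/
structure APCMS (F V : Type*) [CommRing F] [Algebra ℝ F]
    [LieRing V] [Module F V] [Module ℝ V] [IsScalarTower ℝ F V]
    extends SmoothSetting F V where
  psi : V → V
  zeta : V
  tau : V → F
  g : V → V → F
  psi_add : ∀ X Y : V, psi (X + Y) = psi X + psi Y
  psi_smul : ∀ (f : F) (X : V), psi (f • X) = f • psi X
  tau_add : ∀ X Y : V, tau (X + Y) = tau X + tau Y
  tau_smul : ∀ (f : F) (X : V), tau (f • X) = f * tau X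
  g_addX : ∀ X Y Z : V, g (X + Y) Z = g X Z + g Y Z
  g_smulX : ∀ (f : F) (X Y : V), g (f • X) Y = f * g X Y
  g_symm : ∀ X Y : V, g X Y = g Y X
  g_nondeg : ∀ X : V, (∀ Y : V, g X Y = 0) → X = 0
  psi_psi : ∀ X : V, psi (psi X) = X - tau X • zeta
  tau_zeta : tau zeta = 1
  psi_zeta : psi zeta = 0
  tau_psi : ∀ X : V, tau (psi X) = 0
  g_psi_psi : ∀ X Y : V, g (psi X) (psi Y) = - g X Y + tau X * tau Y
  nabla : V → V → V
  nabla_addX : ∀ X Y Z : V, nabla (X + Y) Z = nabla X Z + nabla Y Z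
  nabla_smulX : ∀ (f : F) (X Y : V), nabla (f • X) Y = f • nabla X Y
  nabla_addY : ∀ X Y Z : V, nabla X (Y + Z) = nabla X Y + nabla X Z
  nabla_leibniz : ∀ (X : V) (f : F) (Y : V),
    nabla X (f • Y) = D X f • Y + f • nabla X Y
  nabla_torsion_free : ∀ X Y : V, nabla X Y - nabla Y X = ⁅X, Y⁆
  nabla_metric : ∀ X Y Z : V,
    D X (g Y Z) = g (nabla X Y) Z + g Y (nabla X Z)

namespace APCMS

variable {F V : Type*} [CommRing F] [Algebra ℝ F]
  [LieRing V] [Module F V] [Module ℝ V] [IsScalarTower ℝ F V]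
variable (A : APCMS F V)

/-- The fundamental form `Ψ(X,Y) = g(X, ψY)`. -/
def Psi2 (X Y : V) : F := A.g X (A.psi Y)

/-- The exterior derivative `dτ`, via the coboundary formula
`2 dτ(X,Y) = X τ(Y) - Y τ(X) - τ([X,Y])`. -/
def dTau (X Y : V) : F :=
  ((1:ℝ)/2) • (A.D X (A.tau Y) - A.D Y (A.tau X) - A.tau ⁅X, Y⁆)

/-- The exterior derivative `dΨ`, via the coboundary formula. -/
def dPsi (X Y Z : V) : F :=
  ((1:ℝ)/3) • (A.D X (A.Psi2 Y Z) + A.D Y (A.Psi2 Z X) + A.D Z (A.Psi2 X Y)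
    - A.Psi2 ⁅X, Y⁆ Z - A.Psi2 ⁅Y, Z⁆ X - A.Psi2 ⁅Z, X⁆ Y)

/-- The Lie derivative `(L_ζ τ)(X)`. -/
def lieTau (X : V) : F := A.D A.zeta (A.tau X) - A.tau ⁅A.zeta, X⁆

/-- The Lie derivative `(L_ζ ψ)(X)`. -/
def liePsi (X : V) : V := ⁅A.zeta, A.psi X⁆ - A.psi ⁅A.zeta, X⁆

/-- The tensor field `h = (1/2) L_ζ ψ`. -/
def h (X : V) : V := ((1:ℝ)/2) • A.liePsi X

/-- The Nijenhuis torsion `[ψ,ψ](X,Y)`. -/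
def nijPsi (X Y : V) : V :=
  A.psi (A.psi ⁅X, Y⁆) + ⁅A.psi X, A.psi Y⁆
    - A.psi ⁅A.psi X, Y⁆ - A.psi ⁅X, A.psi Y⁆

/-- The tensor `K⁽¹⁾(X,Y) = [ψ,ψ](X,Y) - 2 dτ(X,Y) ζ`. -/
def K1 (X Y : V) : V := A.nijPsi X Y - (2 * A.dTau X Y) • A.zeta

/-- The tensor `K⁽²⁾(X,Y) = (L_{ψX} τ)(Y) - (L_{ψY} τ)(X)`. -/
def K2 (X Y : V) : F :=
  (A.D (A.psi X) (A.tau Y) - A.tau ⁅A.psi X, Y⁆)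
    - (A.D (A.psi Y) (A.tau X) - A.tau ⁅A.psi Y, X⁆)

/-- The covariant derivative `(∇_X ψ)(Y)`. -/
def covPsi (X Y : V) : V := A.nabla X (A.psi Y) - A.psi (A.nabla X Y)

/-- `M` is `τ`-normal: `K⁽¹⁾(X,Y) = 0` whenever `τ(X) = τ(Y) = 0`. -/
def TauNormal : Prop := ∀ X Y : V, A.tau X = 0 → A.tau Y = 0 → A.K1 X Y = 0

/-- `M` is normal: `K⁽¹⁾ = 0` identically. -/
def Normal : Prop := ∀ X Y : V, A.K1 X Y = 0

/-- `X` is a section of the `+1`-eigendistribution `V⁺` of `ψ`. -/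
def Vp (X : V) : Prop := A.psi X = X

/-- `X` is a section of the `-1`-eigendistribution `V⁻` of `ψ`. -/
def Vm (X : V) : Prop := A.psi X = -X

/-- `M` is a para-CR manifold: both eigendistributions `V⁺`, `V⁻` of `ψ` are
involutive. -/
def ParaCR : Prop :=
  (∀ X Y : V, A.Vp X → A.Vp Y → A.Vp ⁅X, Y⁆) ∧
  (∀ X Y : V, A.Vm X → A.Vm Y → A.Vm ⁅X, Y⁆)

/-- The characteristic form `τ` is a contact form: `dτ` is nondegenerate on
the kernel distribution of `τ`. -/
def IsContact : Prop :=
  ∀ X : V, A.tau X = 0 → (∀ Y : V, A.dTau X Y = 0) → X = 0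

/-- The Reeb vector field of the contact form `τ` equals the characteristic
vector field `ζ` (i.e. `τ(ζ) = 1`, which holds by definition, and
`ι_ζ dτ = 0`). -/
def ReebEqZeta : Prop := ∀ X : V, A.dTau A.zeta X = 0

/-- The Pang invariant `Π(X,Y) = (L_X L_Y τ)(ζ) = -τ([[ζ,X],Y])`; restricted
to sections of `V⁺` (resp. `V⁻`) it is the Pang invariant `Π₊` (resp. `Π₋`)
of the Legendrian foliation determined by `V⁺` (resp. `V⁻`). -/
def Pang (X Y : V) : F := - A.tau ⁅⁅A.zeta, X⁆, Y⁆

/-- The tensor field `χ(X,Y) = dτ(hX, ψY)`. -/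
def chi (X Y : V) : F := A.dTau (A.h X) (A.psi Y)

/-- `Dc` is a linear connection on `M`. -/
def IsConnection (Dc : V → V → V) : Prop :=
  (∀ X Y Z : V, Dc (X + Y) Z = Dc X Z + Dc Y Z) ∧
  (∀ (f : F) (X Y : V), Dc (f • X) Y = f • Dc X Y) ∧
  (∀ X Y Z : V, Dc X (Y + Z) = Dc X Y + Dc X Z) ∧
  (∀ (X : V) (f : F) (Y : V), Dc X (f • Y) = A.D X f • Y + f • Dc X Y)

/-- `Dc` is a parallelization: a linear connection making the whole almost
paracontact metric structure parallel: `∇̃ψ = 0`, `∇̃ζ = 0`, `∇̃τ = 0`,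
`∇̃g = 0`. -/
def IsParallelization (Dc : V → V → V) : Prop :=
  A.IsConnection Dc ∧
  (∀ X Y : V, Dc X (A.psi Y) = A.psi (Dc X Y)) ∧
  (∀ X : V, Dc X A.zeta = 0) ∧
  (∀ X Y : V, A.D X (A.tau Y) = A.tau (Dc X Y)) ∧
  (∀ X Y Z : V, A.D X (A.g Y Z) = A.g (Dc X Y) Z + A.g Y (Dc X Z))

end APCMS

namespace APCMS

section Aux

variable {F V : Type*} [CommRing F] [Algebra ℝ F]
  [LieRing V] [Module F V] [Module ℝ V] [IsScalarTower ℝ F V]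

lemma half_sum (t : F) : ((1:ℝ)/2) • (t + t) = t := by
  rw [smul_add, ← add_smul]; norm_num

variable (A : APCMS F V)

lemma D_oneF (X : V) : A.D X 1 = 0 := by
  have h := A.D_mul X 1 1
  simp only [mul_one, one_mul] at h
  exact (left_eq_add.mp h)

lemma D_zeroF (X : V) : A.D X 0 = 0 := by
  have h := A.D_add X 0 0
  rw [add_zero] at h
  exact (left_eq_add.mp h)

lemma D_negF (X : V) (f : F) : A.D X (-f) = - A.D X f := by
  have h := A.D_add X f (-f)
  rw [add_neg_cancel, A.D_zeroF] at h
  exact eq_neg_of_add_eq_zero_right h.symm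

lemma D_subF (X : V) (f g : F) : A.D X (f - g) = A.D X f - A.D X g := by
  rw [sub_eq_add_neg, A.D_add, A.D_negF, ← sub_eq_add_neg]

lemma D_subX (X Y : V) (f : F) : A.D (X - Y) f = A.D X f - A.D Y f := by
  have h := A.D_addX (X - Y) Y f
  rw [sub_add_cancel] at h
  linear_combination -h

lemma tau_zeroV : A.tau 0 = 0 := by
  have h := A.tau_smul 0 0
  rw [zero_smul, zero_mul] at h
  exact h

lemma tau_negV (X : V) : A.tau (-X) = - A.tau X := by
  have h := A.tau_add X (-X)
  rw [add_neg_cancel, A.tau_zeroV] at h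
  exact eq_neg_of_add_eq_zero_right h.symm

lemma tau_subV (X Y : V) : A.tau (X - Y) = A.tau X - A.tau Y := by
  rw [sub_eq_add_neg, A.tau_add, A.tau_negV, ← sub_eq_add_neg]

lemma psi_zeroV : A.psi 0 = 0 := by
  have h := A.psi_smul 0 0
  rw [zero_smul, zero_smul] at h
  exact h

lemma psi_negV (X : V) : A.psi (-X) = - A.psi X := by
  have h := A.psi_add X (-X)
  rw [add_neg_cancel, A.psi_zeroV] at h
  exact eq_neg_of_add_eq_zero_right h.symm

lemma psi_subV (X Y : V) : A.psi (X - Y) = A.psi X - A.psi Y := by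
  rw [sub_eq_add_neg, A.psi_add, A.psi_negV, ← sub_eq_add_neg]

lemma tau_rsmul (r : ℝ) (X : V) : A.tau (r • X) = r • A.tau X := by
  rw [← algebraMap_smul F r X, A.tau_smul, Algebra.smul_def]

lemma psi_rsmul (r : ℝ) (X : V) : A.psi (r • X) = r • A.psi X := by
  rw [← algebraMap_smul F r X, A.psi_smul, algebraMap_smul]

lemma two_smul_half (t : F) : (2:F) * (((1:ℝ)/2) • t) = t := by
  rw [mul_smul_comm, two_mul, half_sum]

lemma D_halfc (X : V) : A.D X ((algebraMap ℝ F) ((1:ℝ)/2)) = 0 := by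
  set c := (algebraMap ℝ F) ((1:ℝ)/2) with hc
  have hcc : c + c = 1 := by rw [hc, ← map_add]; norm_num
  have h2 : A.D X c + A.D X c = 0 := by rw [← A.D_add, hcc, A.D_oneF]
  calc A.D X c = (c * 2) * A.D X c := by rw [mul_two, hcc, one_mul]
    _ = c * (A.D X c + A.D X c) := by rw [mul_assoc, two_mul]
    _ = 0 := by rw [h2, mul_zero]

include A in
lemma lie_rhalf (X Y : V) :
    ⁅(((1:ℝ)/2) • X : V), Y⁆ = ((1:ℝ)/2) • ⁅X, Y⁆ := by
  have h1 : ⁅Y, ((algebraMap ℝ F) ((1:ℝ)/2)) • X⁆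
      = ((algebraMap ℝ F) ((1:ℝ)/2)) • ⁅Y, X⁆ := by
    rw [A.bracket_smul, A.D_halfc, zero_smul, add_zero]
  calc ⁅(((1:ℝ)/2) • X : V), Y⁆ = -⁅Y, ((1:ℝ)/2) • X⁆ := (lie_skew _ _).symm
    _ = -⁅Y, ((algebraMap ℝ F) ((1:ℝ)/2)) • X⁆ := by rw [algebraMap_smul]
    _ = -(((algebraMap ℝ F) ((1:ℝ)/2)) • ⁅Y, X⁆) := by rw [h1]
    _ = ((1:ℝ)/2) • (-⁅Y, X⁆) := by rw [algebraMap_smul, smul_neg]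
    _ = ((1:ℝ)/2) • ⁅X, Y⁆ := by rw [lie_skew]

lemma reebD (hR : A.ReebEqZeta) (X : V) :
    A.tau ⁅A.zeta, X⁆ = A.D A.zeta (A.tau X) := by
  have h := hR X
  unfold APCMS.dTau at h
  rw [A.tau_zeta, A.D_oneF] at h
  have h2 := congrArg (fun t : F => (2:ℝ) • t) h
  simp only [smul_smul, smul_zero] at h2
  norm_num at h2
  linear_combination -h2

lemma dTau_ker {X Y : V} (hx : A.tau X = 0) (hy : A.tau Y = 0) :
    A.dTau X Y = -(((1:ℝ)/2) • A.tau ⁅X, Y⁆) := by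
  unfold APCMS.dTau
  rw [hx, hy, A.D_zeroF, A.D_zeroF, sub_zero, zero_sub, smul_neg]

lemma dTau_skew (X Y : V) : A.dTau X Y = - A.dTau Y X := by
  unfold APCMS.dTau
  have ht : A.tau ⁅Y, X⁆ = - A.tau ⁅X, Y⁆ := by rw [← lie_skew, A.tau_negV]
  rw [ht, ← smul_neg]
  congr 1
  ring

lemma dTau_smulY (X : V) (f : F) (Y : V) :
    A.dTau X (f • Y) = f * A.dTau X Y := by
  unfold APCMS.dTau
  rw [A.tau_smul, A.D_mul, A.D_smulX, A.bracket_smul, A.tau_add, A.tau_smul,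
    A.tau_smul, mul_smul_comm]
  congr 1
  ring

lemma dTau_zeroY (X : V) : A.dTau X 0 = 0 := by
  have h := A.dTau_smulY X 0 0
  rw [zero_smul, zero_mul] at h
  exact h

lemma dTau_subY (X Y Z : V) : A.dTau X (Y - Z) = A.dTau X Y - A.dTau X Z := by
  unfold APCMS.dTau
  rw [A.tau_subV, A.D_subF, A.D_subX, lie_sub, A.tau_subV, ← smul_sub]
  congr 1
  ring

lemma dTau_negY (X Y : V) : A.dTau X (-Y) = - A.dTau X Y := by
  have h := A.dTau_subY X 0 Y
  rw [zero_sub] at h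
  rw [A.dTau_zeroY, zero_sub] at h
  exact h

lemma dTau_negX (X Y : V) : A.dTau (-X) Y = - A.dTau X Y := by
  rw [A.dTau_skew, A.dTau_negY, neg_neg, A.dTau_skew]

lemma dTau_zetaY (hR : A.ReebEqZeta) (X : V) : A.dTau X A.zeta = 0 := by
  rw [A.dTau_skew, hR, neg_zero]

lemma dTau_reduceY (hR : A.ReebEqZeta) (U Y : V) :
    A.dTau U (Y - A.tau Y • A.zeta) = A.dTau U Y := by
  rw [A.dTau_subY, A.dTau_smulY, A.dTau_zetaY hR, mul_zero, sub_zero]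

lemma tau_proj (X : V) : A.tau (X - A.tau X • A.zeta) = 0 := by
  rw [A.tau_subV, A.tau_smul, A.tau_zeta, mul_one, sub_self]

lemma psi_proj (Y : V) : A.psi (Y - A.tau Y • A.zeta) = A.psi Y := by
  rw [A.psi_subV, A.psi_smul, A.psi_zeta, smul_zero, sub_zero]

/-- The key consequence of `τ`-normality: `τ⁅ψX, ψY⁆ = -τ⁅X, Y⁆` on `ker τ`. -/
lemma tau_lie_psi_psi (hN : A.TauNormal) {X Y : V}
    (hx : A.tau X = 0) (hy : A.tau Y = 0) :
    A.tau ⁅A.psi X, A.psi Y⁆ = - A.tau ⁅X, Y⁆ := by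
  have hk : A.nijPsi X Y = (2 * A.dTau X Y) • A.zeta :=
    sub_eq_zero.mp (hN X Y hx hy)
  have ht := congrArg A.tau hk
  unfold APCMS.nijPsi at ht
  rw [A.psi_psi] at ht
  simp only [A.tau_subV, A.tau_add, A.tau_smul, A.tau_zeta, A.tau_psi,
    mul_one] at ht
  rw [A.dTau_ker hx hy] at ht
  have h2 : (2:F) * (((1:ℝ)/2) • A.tau ⁅X, Y⁆) = A.tau ⁅X, Y⁆ :=
    two_smul_half _
  linear_combination ht - h2

lemma tau_hzero (hR : A.ReebEqZeta) (X : V) : A.tau (A.h X) = 0 := by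
  unfold APCMS.h APCMS.liePsi
  rw [A.tau_rsmul, A.tau_subV, A.reebD hR]
  simp only [A.tau_psi]
  rw [A.D_zeroF, sub_self, smul_zero]

lemma h_reduce (X : V) : A.h (X - A.tau X • A.zeta) = A.h X := by
  unfold APCMS.h APCMS.liePsi
  have h1 : A.psi (X - A.tau X • A.zeta) = A.psi X := A.psi_proj X
  have h2 : A.psi ⁅A.zeta, X - A.tau X • A.zeta⁆ = A.psi ⁅A.zeta, X⁆ := by
    rw [lie_sub, A.bracket_smul, lie_self, smul_zero, zero_add, A.psi_subV,
      A.psi_smul, A.psi_zeta, smul_zero, sub_zero]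
  rw [h1, h2]

lemma psi_h_anti (hR : A.ReebEqZeta) (X : V) :
    A.h (A.psi X) = - A.psi (A.h X) := by
  unfold APCMS.h APCMS.liePsi
  rw [A.psi_rsmul, A.psi_subV, ← smul_neg, neg_sub]
  have key : ⁅A.zeta, A.psi (A.psi X)⁆ = A.psi (A.psi ⁅A.zeta, X⁆) := by
    rw [A.psi_psi, A.psi_psi, lie_sub, A.bracket_smul, lie_self, smul_zero,
      zero_add, A.reebD hR]
  rw [key]

lemma tau_lie_h (hR : A.ReebEqZeta) (hN : A.TauNormal) {X Y : V}
    (hx : A.tau X = 0) (hy : A.tau Y = 0) :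
    A.tau ⁅A.h X, A.psi Y⁆ = ((1:ℝ)/2) •
      (A.tau ⁅⁅A.zeta, A.psi X⁆, A.psi Y⁆ + A.tau ⁅⁅A.zeta, X⁆, Y⁆) := by
  have hzx : A.tau ⁅A.zeta, X⁆ = 0 := by rw [A.reebD hR, hx, A.D_zeroF]
  have hstar := A.tau_lie_psi_psi hN hzx hy
  unfold APCMS.h APCMS.liePsi
  rw [A.lie_rhalf, A.tau_rsmul, sub_lie, A.tau_subV, hstar, sub_neg_eq_add]

lemma sym_core (hR : A.ReebEqZeta) (hN : A.TauNormal) {X Y : V}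
    (hx : A.tau X = 0) (hy : A.tau Y = 0) :
    A.tau ⁅A.h X, A.psi Y⁆ = A.tau ⁅A.h Y, A.psi X⁆ := by
  rw [A.tau_lie_h hR hN hx hy, A.tau_lie_h hR hN hy hx]
  have j : ∀ U W : V, ⁅A.zeta, ⁅U, W⁆⁆ = ⁅⁅A.zeta, U⁆, W⁆ - ⁅⁅A.zeta, W⁆, U⁆ := by
    intro U W
    rw [leibniz_lie, ← lie_skew U ⁅A.zeta, W⁆, ← sub_eq_add_neg]
  have e1 : A.tau ⁅⁅A.zeta, A.psi X⁆, A.psi Y⁆ - A.tau ⁅⁅A.zeta, A.psi Y⁆, A.psi X⁆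
      = A.D A.zeta (- A.tau ⁅X, Y⁆) := by
    rw [← A.tau_subV, ← j, A.reebD hR, A.tau_lie_psi_psi hN hx hy]
  have e2 : A.tau ⁅⁅A.zeta, X⁆, Y⁆ - A.tau ⁅⁅A.zeta, Y⁆, X⁆
      = A.D A.zeta (A.tau ⁅X, Y⁆) := by
    rw [← A.tau_subV, ← j, A.reebD hR]
  have e3 : A.D A.zeta (- A.tau ⁅X, Y⁆) + A.D A.zeta (A.tau ⁅X, Y⁆) = 0 := by
    rw [← A.D_add, neg_add_cancel, A.D_zeroF]
  congr 1
  linear_combination e1 + e2 + e3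

lemma two_a_core (hR : A.ReebEqZeta) (hN : A.TauNormal) {X Y : V}
    (hx : A.tau X = 0) (hy : A.tau Y = 0) :
    A.tau ⁅A.h X, A.psi Y⁆ = - A.tau ⁅A.psi (A.h X), Y⁆ := by
  have h0 : A.tau (A.psi (A.h X)) = 0 := A.tau_psi _
  have hs := A.tau_lie_psi_psi hN h0 hy
  rw [A.psi_psi, A.tau_hzero hR, zero_smul, sub_zero] at hs
  exact hs

lemma chi_red (hR : A.ReebEqZeta) (X Y : V) :
    A.chi X Y = -(((1:ℝ)/2) •
      A.tau ⁅A.h (X - A.tau X • A.zeta), A.psi (Y - A.tau Y • A.zeta)⁆) := by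
  unfold APCMS.chi
  rw [← A.h_reduce X, ← A.psi_proj Y]
  exact A.dTau_ker (A.tau_hzero hR _) (A.tau_psi _)

lemma chi_eq_neg (hR : A.ReebEqZeta) (hN : A.TauNormal) (X Y : V) :
    A.chi X Y = - A.dTau (A.psi (A.h X)) Y := by
  rw [A.chi_red hR, A.two_a_core hR hN (A.tau_proj X) (A.tau_proj Y),
    ← A.h_reduce X, ← A.dTau_reduceY hR (A.psi (A.h (X - A.tau X • A.zeta))) Y,
    A.dTau_ker (A.tau_psi _) (A.tau_proj Y), smul_neg]

end Aux

end APCMS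

/-- Let `M` be an almost paracontact metric manifold whose
characteristic form `τ` is a contact form and whose characteristic vector
field `ζ` is autoparallel (equals the Reeb field of `τ`), and assume `M` is
`τ`-normal. Then `χ(X,Y) = dτ(hX, ψY)` satisfies: `χ(X,Y) = χ(Y,X)`;
`χ(X,Y) = -dτ(ψhX, Y) = dτ(hψX, Y)`; `χ(X⁺, Y⁻) = 0` for `X⁺` a section of
`V⁺` and `Y⁻` a section of `V⁻` (i.e. `V⁺` and `V⁻` are `χ`-orthogonal); and
`χ|_{V⁺} = (1/2)Π₊`, `χ|_{V⁻} = (1/2)Π₋`. -/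
theorem chi_properties
    {F V : Type*} [CommRing F] [Algebra ℝ F]
    [LieRing V] [Module F V] [Module ℝ V] [IsScalarTower ℝ F V]
    (A : APCMS F V) (hc : A.IsContact) (hR : A.ReebEqZeta)
    (hN : A.TauNormal) :
    (∀ X Y : V, A.chi X Y = A.chi Y X) ∧
    (∀ X Y : V, A.chi X Y = - A.dTau (A.psi (A.h X)) Y ∧
      A.chi X Y = A.dTau (A.h (A.psi X)) Y) ∧
    (∀ X Y : V, A.Vp X → A.Vm Y → A.chi X Y = 0) ∧
    (∀ X Y : V, A.Vp X → A.Vp Y → A.chi X Y = ((1:ℝ)/2) • A.Pang X Y) ∧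
    (∀ X Y : V, A.Vm X → A.Vm Y → A.chi X Y = ((1:ℝ)/2) • A.Pang X Y) := by
  refine ⟨?_, ?_, ?_, ?_, ?_⟩
  · -- symmetry
    intro X Y
    rw [A.chi_red hR, A.chi_red hR Y X,
      A.sym_core hR hN (A.tau_proj X) (A.tau_proj Y)]
  · -- χ(X,Y) = -dτ(ψhX, Y) = dτ(hψX, Y)
    intro X Y
    have h2a := A.chi_eq_neg hR hN X Y
    refine ⟨h2a, ?_⟩
    rw [A.psi_h_anti hR, A.dTau_negX]
    exact h2a
  · -- χ-orthogonality of V⁺ and V⁻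
    intro X Y hXp hYm
    have hXp' : A.psi X = X := hXp
    have hYm' : A.psi Y = -Y := hYm
    have e1 : A.chi X Y = - A.dTau (A.h X) Y := by
      unfold APCMS.chi
      rw [hYm', A.dTau_negY]
    have e2 : A.chi X Y = A.dTau (A.h X) Y := by
      rw [A.chi_eq_neg hR hN X Y]
      have hanti := A.psi_h_anti hR X
      rw [hXp'] at hanti
      have h3 : A.psi (A.h X) = - A.h X := neg_eq_iff_eq_neg.mp hanti.symm
      rw [h3, A.dTau_negX, neg_neg]
    have hz : A.chi X Y + A.chi X Y = 0 := by
      nth_rewrite 1 [e1]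
      rw [e2, neg_add_cancel]
    calc A.chi X Y = ((1:ℝ)/2) • (A.chi X Y + A.chi X Y) := (APCMS.half_sum _).symm
      _ = 0 := by rw [hz, smul_zero]
  · -- restriction to V⁺
    intro X Y hXp hYp
    have hXp' : A.psi X = X := hXp
    have hYp' : A.psi Y = Y := hYp
    have hx : A.tau X = 0 := by rw [← hXp']; exact A.tau_psi X
    have hy : A.tau Y = 0 := by rw [← hYp']; exact A.tau_psi Y
    unfold APCMS.chi APCMS.Pang
    rw [A.dTau_ker (A.tau_hzero hR X) (A.tau_psi Y),
      A.tau_lie_h hR hN hx hy, hXp', hYp', APCMS.half_sum, smul_neg]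
  · -- restriction to V⁻
    intro X Y hXm hYm
    have hXm' : A.psi X = -X := hXm
    have hYm' : A.psi Y = -Y := hYm
    have hx : A.tau X = 0 := by
      have h := A.tau_psi X
      rw [hXm', A.tau_negV, neg_eq_zero] at h
      exact h
    have hy : A.tau Y = 0 := by
      have h := A.tau_psi Y
      rw [hYm', A.tau_negV, neg_eq_zero] at h
      exact h
    have hb : ⁅⁅A.zeta, -X⁆, (-Y : V)⁆ = ⁅⁅A.zeta, X⁆, Y⁆ := by
      simp
    unfold APCMS.chi APCMS.Pang
    rw [A.dTau_ker (A.tau_hzero hR X) (A.tau_psi Y),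
      A.tau_lie_h hR hN hx hy, hXm', hYm', hb, APCMS.half_sum, smul_neg]
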